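/- Let (V,E) be a connected multigraph with |V| ≥ 2 and let X be a minimum cut, i.e., ∅ ≠ X ⊊ V and d_E(X) ≤ d_E(Y) for every Y with ∅ ≠ Y ⊊ V. Then both induced subgraphs, on X and on V \ X, are connected. -/

import Mathlib

open scoped Classical

/-- The number of edges of the edge multiset `Es` (counted with multiplicity)
with exactly one endpoint in `X`. -/
noncomputable def cutDeg {V : Type*} (Es : Multiset (Sym2 V)) (X : Finset V) : ℕ :=
  Multiset.card (Es.filter (fun e => ∃ u v, e = s(u, v) ∧ u ∈ X ∧ v ∉ X))

/-- The simple graph underlying a multiset of edges: `u` and `v` are adjacent iff they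
are distinct and joined by at least one edge. -/
def toSimple {V : Type*} (Es : Multiset (Sym2 V)) : SimpleGraph V where
  Adj u v := u ≠ v ∧ s(u, v) ∈ Es
  symm := by
    constructor
    intro u v h
    exact ⟨h.1.symm, by rw [Sym2.eq_swap]; exact h.2⟩
  loopless := by constructor; intro v h; exact h.1 rfl

/-!
If the subgraph induced by one side `X` of a minimum cut splits into parts `A` and `B` with no
edge between them, then `d(X) = d(A) + d(B) ≥ 2 d(X)`, so `d(X) = 0`, which is impossible in a
connected graph. The other side is handled by `d(Xᶜ) = d(X)`.
-/

namespace SimpleGraph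

variable {V : Type*} {G : SimpleGraph V}

theorem exists_partition_of_not_connected_induce [DecidableEq V] {X : Finset V} (hX : X.Nonempty)
    (h : ¬ (G.induce (X : Set V)).Connected) :
    ∃ A B : Finset V, A.Nonempty ∧ B.Nonempty ∧ Disjoint A B ∧ A ∪ B = X ∧
      ∀ a ∈ A, ∀ b ∈ B, ¬ G.Adj a b := by
  have : Nonempty (X : Set V) := hX.coe_sort
  obtain ⟨a, b, hab⟩ : ∃ a b : (X : Set V), ¬ (G.induce (X : Set V)).Reachable a b := by
    simpa [connected_iff, Preconnected] using h
  let reach (v : V) : Prop := ∃ hv : v ∈ X, (G.induce (X : Set V)).Reachable a ⟨v, hv⟩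
  refine ⟨X.filter reach, X.filter (¬ reach ·), ⟨a, ?_⟩, ⟨b, ?_⟩,
    Finset.disjoint_filter_filter_not _ _ _, Finset.filter_union_filter_not_eq _ _, ?_⟩
  · exact Finset.mem_filter.2 ⟨a.2, a.2, .rfl⟩
  · exact Finset.mem_filter.2 ⟨b.2, fun ⟨_, hr⟩ => hab hr⟩
  · simp only [Finset.mem_filter, reach]
    rintro u ⟨-, huX, hu⟩ v ⟨hvX, hv⟩ huv
    exact hv ⟨hvX, hu.trans (Adj.reachable (G := G.induce (X : Set V)) (v := ⟨v, hvX⟩) huv)⟩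

end SimpleGraph

section Cut

variable {V : Type*}

def Crosses (X : Finset V) (e : Sym2 V) : Prop :=
  ∃ u v, e = s(u, v) ∧ u ∈ X ∧ v ∉ X

theorem crosses_mk_iff {X : Finset V} {a b : V} : Crosses X s(a, b) ↔ ¬ (a ∈ X ↔ b ∈ X) := by
  constructor
  · rintro ⟨u, v, he, hu, hv⟩
    rcases Sym2.eq_iff.1 he with ⟨rfl, rfl⟩ | ⟨rfl, rfl⟩ <;> tauto
  · intro h
    by_cases ha : a ∈ X
    · exact ⟨a, b, rfl, ha, by tauto⟩
    · exact ⟨b, a, Sym2.eq_swap, by tauto, ha⟩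

theorem cutDeg_eq_card_filter (E : Multiset (Sym2 V)) (X : Finset V) :
    cutDeg E X = Multiset.card (E.filter (Crosses X)) := rfl

theorem cutDeg_compl [Fintype V] [DecidableEq V] (E : Multiset (Sym2 V)) (X : Finset V) :
    cutDeg E Xᶜ = cutDeg E X := by
  simp only [cutDeg_eq_card_filter]
  congr 1
  refine Multiset.filter_congr fun e _ => ?_
  induction e using Sym2.ind with
  | _ a b => simp only [crosses_mk_iff, Finset.mem_compl]; tauto

theorem cutDeg_union [DecidableEq V] (E : Multiset (Sym2 V)) {A B : Finset V}
    (hAB : Disjoint A B) (hE : ∀ a ∈ A, ∀ b ∈ B, s(a, b) ∉ E) :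
    cutDeg E (A ∪ B) = cutDeg E A + cutDeg E B := by
  have hcross : ∀ e ∈ E,
      (Crosses (A ∪ B) e ↔ Crosses A e ∨ Crosses B e) ∧ ¬ (Crosses A e ∧ Crosses B e) := by
    intro e he
    induction e using Sym2.ind with
    | _ a b =>
      have hab : a ∈ A → b ∉ B := fun ha hb => hE a ha b hb he
      have hba : b ∈ A → a ∉ B := fun hb ha => hE b hb a ha (Sym2.eq_swap ▸ he)
      have ha : a ∈ A → a ∉ B := fun ha => Finset.disjoint_left.1 hAB ha
      have hb : b ∈ A → b ∉ B := fun hb => Finset.disjoint_left.1 hAB hb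
      simp only [crosses_mk_iff, Finset.mem_union]
      tauto
  rw [cutDeg_eq_card_filter, cutDeg_eq_card_filter, cutDeg_eq_card_filter, ← Multiset.card_add,
    Multiset.filter_add_filter, Multiset.filter_eq_nil.2 fun e he => (hcross e he).2, add_zero,
    Multiset.filter_congr fun e he => (hcross e he).1]

theorem cutDeg_pos {E : Multiset (Sym2 V)} (hE : (toSimple E).Preconnected) {X : Finset V}
    {a b : V} (ha : a ∈ X) (hb : b ∉ X) : 0 < cutDeg E X := by
  obtain ⟨d, -, hd, hd'⟩ := (hE a b).some.exists_boundary_dart (X : Set V) ha hb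
  rw [cutDeg_eq_card_filter, Multiset.card_pos_iff_exists_mem]
  exact ⟨s(d.fst, d.snd), Multiset.mem_filter.2 ⟨d.adj.2, d.fst, d.snd, rfl, hd, hd'⟩⟩

structure IsMinCut [Fintype V] (E : Multiset (Sym2 V)) (X : Finset V) : Prop where
  ne_empty : X ≠ ∅
  ne_univ : X ≠ Finset.univ
  le : ∀ Y : Finset V, Y ≠ ∅ → Y ≠ Finset.univ → cutDeg E X ≤ cutDeg E Y

namespace IsMinCut

variable [Fintype V] [DecidableEq V] {E : Multiset (Sym2 V)} {X : Finset V}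

theorem compl (h : IsMinCut E X) : IsMinCut E Xᶜ where
  ne_empty := by rw [Ne, Finset.compl_eq_empty_iff]; exact h.ne_univ
  ne_univ := by rw [Ne, Finset.compl_eq_univ_iff]; exact h.ne_empty
  le Y hY hY' := cutDeg_compl E X ▸ h.le Y hY hY'

theorem induce_connected (h : IsMinCut E X) (hconn : (toSimple E).Connected) :
    ((toSimple E).induce (X : Set V)).Connected := by
  obtain ⟨x, hx⟩ := Finset.nonempty_iff_ne_empty.2 h.ne_empty
  obtain ⟨y, hy⟩ : ∃ y, y ∉ X := by simpa [Finset.eq_univ_iff_forall] using h.ne_univ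
  by_contra hX
  obtain ⟨A, B, hA, hB, hAB, rfl, hnadj⟩ :=
    SimpleGraph.exists_partition_of_not_connected_induce ⟨x, hx⟩ hX
  have hsplit : cutDeg E (A ∪ B) = cutDeg E A + cutDeg E B :=
    cutDeg_union E hAB fun a ha b hb hab =>
      hnadj a ha b hb ⟨hAB.forall_ne_finset ha hb, hab⟩
  have hA' : A ≠ Finset.univ := fun hA' => hy (by simp [hA'])
  have hB' : B ≠ Finset.univ := fun hB' => hy (by simp [hB'])
  have hA_min := h.le A hA.ne_empty hA'
  have hB_min := h.le B hB.ne_empty hB'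
  have hpos := cutDeg_pos hconn.preconnected hx hy
  omega

end IsMinCut

end Cut

theorem minCut_sides_connected_general {V : Type*} [Fintype V] [DecidableEq V]
    (E : Multiset (Sym2 V))
    (hconn : (toSimple E).Connected)
    (X : Finset V) (hne : X ≠ ∅) (hnuniv : X ≠ Finset.univ)
    (hmin : ∀ Y : Finset V, Y ≠ ∅ → Y ≠ Finset.univ → cutDeg E X ≤ cutDeg E Y) :
    ((toSimple E).induce (X : Set V)).Connected ∧
      ((toSimple E).induce ((Xᶜ : Finset V) : Set V)).Connected := by
  have hX : IsMinCut E X := ⟨hne, hnuniv, hmin⟩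
  exact ⟨hX.induce_connected hconn, hX.compl.induce_connected hconn⟩

/-- Let `(V, E)` be a connected multigraph with `|V| ≥ 2` and `X` a minimum cut.  Then
both induced subgraphs, on `X` and on `V \ X`, are connected. -/
theorem minCut_sides_connected {V : Type*} [Fintype V] [DecidableEq V]
    (E : Multiset (Sym2 V)) (hE : ∀ e ∈ E, ¬ e.IsDiag)
    (hV : 2 ≤ Fintype.card V) (hconn : (toSimple E).Connected)
    (X : Finset V) (hne : X ≠ ∅) (hnuniv : X ≠ Finset.univ)
    (hmin : ∀ Y : Finset V, Y ≠ ∅ → Y ≠ Finset.univ → cutDeg E X ≤ cutDeg E Y) :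
    ((toSimple E).induce (X : Set V)).Connected ∧
      ((toSimple E).induce ((Xᶜ : Finset V) : Set V)).Connected :=
  minCut_sides_connected_general E hconn X hne hnuniv hmin
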